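/- Let $k \geq 1$, $\alpha \geq -1/2$, and $x_1,\dots,x_k \geq 0$. Then $\Phi_2^{(k)}\!\left[\tfrac{1}{2k},\dots,\tfrac{1}{2k};\alpha+1;\tfrac{x_1}{2},\dots,\tfrac{x_k}{2}\right] \leq {}_1F_1\!\left[\tfrac{1}{2};\alpha+1;\tfrac{\|\mathbf{x}\|}{2}\right] \leq e^{\|\mathbf{x}\|/2}$, where $\|\mathbf{x}\| := \max_{1\leq j\leq k}|x_j|$. -/

import Mathlib

/-
Group the Lauricella series by the total degree `n = j₁ + ⋯ + j_k`. Bounding every `x_i / 2` by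
`‖x‖ / 2`, the degree-`n` part is at most `(‖x‖/2)ⁿ / (α+1)ₙ · ∑_{|j| = n} ∏ (b_i)_{j_i} / j_i!`.
Since `(b)ₙ / n! = multichoose b n`, the Chu–Vandermonde identity
`multichoose (∑ b_i) n = ∑_{|j| = n} ∏ multichoose b_i j_i` turns this sum into
`(∑ b_i)ₙ / n! = (1/2)ₙ / n!`: the `n`-th term of `₁F₁[1/2; α+1; ‖x‖/2]`.
The second inequality is termwise, since `(1/2)ₙ ≤ (α+1)ₙ`.
-/

open scoped BigOperators
open MeasureTheory

/-- The rising factorial (Pochhammer symbol) `(a)_m = a (a+1) ⋯ (a+m-1)`. -/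
noncomputable def risingFactorial (a : ℝ) (m : ℕ) : ℝ := (ascPochhammer ℝ m).eval a

/-- The classical Laguerre polynomial `L_n^{(α)}(x)`. -/
noncomputable def laguerreP (n : ℕ) (α : ℝ) (x : ℝ) : ℝ :=
  risingFactorial (α + 1) n / (Nat.factorial n : ℝ) *
    ∑ j ∈ Finset.range (n + 1),
      risingFactorial (-(n : ℝ)) j / risingFactorial (α + 1) j * x ^ j / (Nat.factorial j : ℝ)

/-- Erdélyi's multivariate Laguerre polynomial `L_{n_1,…,n_k}^{(α)}(x_1,…,x_k)`. -/
noncomputable def mvLaguerre (k : ℕ) (α : ℝ) (n : Fin k → ℕ) (x : Fin k → ℝ) : ℝ :=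
  risingFactorial (α + 1) (∑ i, n i) / (∏ i, (Nat.factorial (n i) : ℝ)) *
    ∑ j ∈ Fintype.piFinset (fun i => Finset.range (n i + 1)),
      (∏ i, risingFactorial (-(n i : ℝ)) (j i)) / risingFactorial (α + 1) (∑ i, j i) *
        ∏ i, x i ^ (j i) / (Nat.factorial (j i) : ℝ)

/-- The confluent Lauricella function `Φ₂^{(k)}[b₁,…,b_k; c; x₁,…,x_k]`. -/
noncomputable def Phi2 (k : ℕ) (b : Fin k → ℝ) (c : ℝ) (x : Fin k → ℝ) : ℝ :=
  ∑' j : Fin k → ℕ,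
    (∏ i, risingFactorial (b i) (j i)) / risingFactorial c (∑ i, j i) *
      ∏ i, x i ^ (j i) / (Nat.factorial (j i) : ℝ)

/-- The confluent hypergeometric function `₁F₁[a; c; x]`. -/
noncomputable def oneF1 (a c x : ℝ) : ℝ :=
  ∑' j : ℕ, risingFactorial a j / risingFactorial c j * x ^ j / (Nat.factorial j : ℝ)

/-- Rooney's constant `q_n = √((2n)!) / (2^{n+1/2} n!)`. -/
noncomputable def qSeq (n : ℕ) : ℝ :=
  Real.sqrt (Nat.factorial (2 * n) : ℝ) /
    ((2 : ℝ) ^ ((n : ℝ) + 1 / 2) * (Nat.factorial n : ℝ))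

/-- The open standard simplex `E_k ⊆ ℝ^k`. -/
def simplexE (k : ℕ) : Set (Fin k → ℝ) := {u | (∀ i, 0 < u i) ∧ ∑ i, u i < 1}

/-- The density of the Dirichlet measure `μ_{(b₁,…,b_k,β)}` with respect to
Lebesgue measure on the simplex `E_k`. -/
noncomputable def dirichletDensity (k : ℕ) (b : Fin k → ℝ) (β : ℝ) (u : Fin k → ℝ) : ℝ :=
  Real.Gamma (∑ i, b i + β) / ((∏ i, Real.Gamma (b i)) * Real.Gamma β) *
    (∏ i, u i ^ (b i - 1)) * (1 - ∑ i, u i) ^ (β - 1)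

open Finset

namespace Ring

variable {R : Type*} [CommRing R] [BinomialRing R]

theorem multichoose_add (r s : R) (n : ℕ) :
    multichoose (r + s) n = ∑ p ∈ antidiagonal n, multichoose r p.1 * multichoose s p.2 := by
  -- Chu–Vandermonde for `choose` at `-r`, `-s`, and `choose (-r) n = (-1)ⁿ • multichoose r n`.
  have h := add_choose_eq (r := -r) (s := -s) n (Commute.all _ _)
  rw [← neg_add, choose_neg'] at h
  have hsign : ∀ p ∈ antidiagonal n, choose (-r) p.1 * choose (-s) p.2 =
      Int.negOnePow n • (multichoose r p.1 * multichoose s p.2) := by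
    intro p hp
    rw [choose_neg', choose_neg', smul_mul_smul_comm, ← Int.negOnePow_add, ← Nat.cast_add,
      mem_antidiagonal.mp hp]
  rw [sum_congr rfl hsign, ← smul_sum] at h
  exact smul_left_cancel _ h

theorem multichoose_sum {ι : Type*} [DecidableEq ι] (s : Finset ι) (b : ι → R) (n : ℕ) :
    multichoose (∑ i ∈ s, b i) n = ∑ f ∈ s.piAntidiag n, ∏ i ∈ s, multichoose (b i) (f i) := by
  induction s using Finset.cons_induction generalizing n with
  | empty => cases n <;> simp [multichoose_zero_succ]
  | cons a s ha ih =>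
    rw [sum_cons, multichoose_add, piAntidiag_cons, sum_disjiUnion]
    refine sum_congr rfl fun p _ => ?_
    rw [ih, mul_sum, sum_map]
    refine sum_congr rfl fun f hf => ?_
    have hfa : f a = 0 := by
      by_contra h
      exact ha ((mem_piAntidiag.mp hf).2 a h)
    rw [prod_cons]
    congr 1
    · simp [hfa]
    · refine prod_congr rfl fun i hi => ?_
      simp [show i ≠ a from fun h => ha (h ▸ hi)]

end Ring

theorem risingFactorial_succ (a : ℝ) (n : ℕ) :
    risingFactorial a (n + 1) = risingFactorial a n * (a + n) :=
  ascPochhammer_succ_eval n a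

theorem risingFactorial_nonneg {a : ℝ} (ha : 0 ≤ a) (n : ℕ) : 0 ≤ risingFactorial a n := by
  induction n with
  | zero => simp [risingFactorial]
  | succ n ih => rw [risingFactorial_succ]; positivity

theorem risingFactorial_le_pow_mul {a c r : ℝ} (ha : 0 ≤ a) (hr : 1 ≤ r) (hac : a ≤ r * c)
    (n : ℕ) : risingFactorial a n ≤ r ^ n * risingFactorial c n := by
  induction n with
  | zero => simp [risingFactorial]
  | succ n ih =>
    have hstep : a + n ≤ r * (c + n) := by nlinarith [(n.cast_nonneg : (0 : ℝ) ≤ n)]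
    rw [risingFactorial_succ, risingFactorial_succ, pow_succ]
    calc risingFactorial a n * (a + n) ≤ (r ^ n * risingFactorial c n) * (r * (c + n)) :=
          mul_le_mul ih hstep (by positivity) ((risingFactorial_nonneg ha n).trans ih)
      _ = _ := by ring

theorem risingFactorial_div_factorial (a : ℝ) (n : ℕ) :
    risingFactorial a n / n.factorial = Ring.multichoose a n := by
  rw [div_eq_iff (by positivity), mul_comm, ← nsmul_eq_mul,
    Ring.factorial_nsmul_multichoose_eq_ascPochhammer, Polynomial.ascPochhammer_smeval_eq_eval,
    risingFactorial]

theorem sum_antidiagonalTuple_prod_risingFactorial_div_factorial {k : ℕ} (b : Fin k → ℝ) (n : ℕ) :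
    ∑ j ∈ Nat.antidiagonalTuple k n, ∏ i, risingFactorial (b i) (j i) / (j i).factorial =
      risingFactorial (∑ i, b i) n / n.factorial := by
  simp only [risingFactorial_div_factorial, Ring.multichoose_sum,
    piAntidiag_univ_fin_eq_antidiagonalTuple]

noncomputable def oneF1Term (a c x : ℝ) (n : ℕ) : ℝ :=
  risingFactorial a n / risingFactorial c n * x ^ n / n.factorial

section
variable {a c x : ℝ}

theorem oneF1Term_nonneg (ha : 0 ≤ a) (hc : 0 ≤ c) (hx : 0 ≤ x) (n : ℕ) :
    0 ≤ oneF1Term a c x n := by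
  have := risingFactorial_nonneg ha n
  have := risingFactorial_nonneg hc n
  unfold oneF1Term
  positivity

theorem oneF1Term_le {r : ℝ} (ha : 0 ≤ a) (hr : 1 ≤ r) (hac : a ≤ r * c) (hx : 0 ≤ x) (n : ℕ) :
    oneF1Term a c x n ≤ (r * x) ^ n / n.factorial := by
  have hc : 0 ≤ c := by nlinarith
  have hratio : risingFactorial a n / risingFactorial c n ≤ r ^ n :=
    div_le_of_le_mul₀ (risingFactorial_nonneg hc n) (by positivity)
      (risingFactorial_le_pow_mul ha hr hac n)
  rw [oneF1Term, mul_pow, mul_div_assoc, mul_div_assoc]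
  exact mul_le_mul_of_nonneg_right hratio (by positivity)

theorem summable_oneF1Term (ha : 0 ≤ a) (hc : 0 < c) (hx : 0 ≤ x) :
    Summable (oneF1Term a c x) := by
  have hac : a ≤ max 1 (a / c) * c := by
    rw [← div_le_iff₀ hc]
    exact le_max_right _ _
  exact (Real.summable_pow_div_factorial _).of_nonneg_of_le
    (oneF1Term_nonneg ha hc.le hx) (oneF1Term_le ha (le_max_left _ _) hac hx)

theorem oneF1_le_exp (ha : 0 ≤ a) (hac : a ≤ c) (hx : 0 ≤ x) : oneF1 a c x ≤ Real.exp x := by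
  have hle : ∀ n, oneF1Term a c x n ≤ x ^ n / n.factorial := by
    simpa only [one_mul] using oneF1Term_le ha le_rfl (by rwa [one_mul]) hx
  have hexp := Real.summable_pow_div_factorial x
  rw [Real.exp_eq_exp_ℝ, NormedSpace.exp_eq_tsum_div]
  exact (hexp.of_nonneg_of_le (oneF1Term_nonneg ha (ha.trans hac) hx) hle).tsum_le_tsum hle hexp
end

theorem tsum_le_tsum_of_sum_antidiagonalTuple_le {k : ℕ} {f : (Fin k → ℕ) → ℝ} {g : ℕ → ℝ}
    (hf : ∀ j, 0 ≤ f j) (hg : Summable g)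
    (hfg : ∀ n, ∑ j ∈ Nat.antidiagonalTuple k n, f j ≤ g n) : ∑' j, f j ≤ ∑' n, g n := by
  let e := Nat.sigmaAntidiagonalTupleEquivTuple k
  have hfiber (n : ℕ) : ∑' j : Nat.antidiagonalTuple k n, f (e ⟨n, j⟩) ≤ g n :=
    (Finset.tsum_subtype _ f).trans_le (hfg n)
  have hsummable : Summable (f ∘ e) :=
    (summable_sigma_of_nonneg fun _ => hf _).mpr ⟨fun _ => .of_finite,
      hg.of_nonneg_of_le (fun _ => tsum_nonneg fun _ => hf _) hfiber⟩
  rw [← e.tsum_eq]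
  exact (hsummable.tsum_sigma).trans_le (hsummable.sigma.tsum_le_tsum hfiber hg)

noncomputable def Phi2Term (k : ℕ) (b : Fin k → ℝ) (c : ℝ) (x : Fin k → ℝ) (j : Fin k → ℕ) : ℝ :=
  (∏ i, risingFactorial (b i) (j i)) / risingFactorial c (∑ i, j i) *
    ∏ i, x i ^ (j i) / (Nat.factorial (j i) : ℝ)

section
variable {k : ℕ} {b : Fin k → ℝ} {c : ℝ} {y : Fin k → ℝ}

theorem Phi2Term_nonneg (hb : ∀ i, 0 ≤ b i) (hc : 0 ≤ c) (hy : ∀ i, 0 ≤ y i) (j : Fin k → ℕ) :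
    0 ≤ Phi2Term k b c y j := by
  unfold Phi2Term
  exact mul_nonneg
    (div_nonneg (prod_nonneg fun i _ => risingFactorial_nonneg (hb i) _)
      (risingFactorial_nonneg hc _))
    (prod_nonneg fun i _ => div_nonneg (pow_nonneg (hy i) _) (Nat.cast_nonneg _))

theorem Phi2Term_le {Y : ℝ} (hb : ∀ i, 0 ≤ b i) (hc : 0 ≤ c) (hy : ∀ i, 0 ≤ y i)
    (hyY : ∀ i, y i ≤ Y) (j : Fin k → ℕ) :
    Phi2Term k b c y j ≤ (∏ i, risingFactorial (b i) (j i) / (j i).factorial) *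
      (Y ^ (∑ i, j i) / risingFactorial c (∑ i, j i)) := by
  have hpow : ∏ i, y i ^ j i ≤ Y ^ (∑ i, j i) := by
    rw [← prod_pow_eq_pow_sum]
    exact prod_le_prod (fun i _ => pow_nonneg (hy i) _)
      fun i _ => pow_le_pow_left₀ (hy i) (hyY i) _
  have hcoeff : 0 ≤ ∏ i, risingFactorial (b i) (j i) / (j i).factorial :=
    prod_nonneg fun i _ => div_nonneg (risingFactorial_nonneg (hb i) _) (Nat.cast_nonneg _)
  calc Phi2Term k b c y j
      = (∏ i, risingFactorial (b i) (j i) / (j i).factorial) *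
          ((∏ i, y i ^ j i) / risingFactorial c (∑ i, j i)) := by
        simp only [Phi2Term, prod_div_distrib]
        ring
    _ ≤ _ := by gcongr; exact risingFactorial_nonneg hc _

theorem Phi2_le_oneF1 {Y : ℝ} (hb : ∀ i, 0 ≤ b i) (hc : 0 < c) (hy : ∀ i, 0 ≤ y i)
    (hyY : ∀ i, y i ≤ Y) (hY : 0 ≤ Y) : Phi2 k b c y ≤ oneF1 (∑ i, b i) c Y := by
  refine tsum_le_tsum_of_sum_antidiagonalTuple_le (Phi2Term_nonneg hb hc.le hy)
    (summable_oneF1Term (sum_nonneg fun i _ => hb i) hc hY) fun n => ?_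
  calc ∑ j ∈ Nat.antidiagonalTuple k n, Phi2Term k b c y j
      ≤ ∑ j ∈ Nat.antidiagonalTuple k n, (∏ i, risingFactorial (b i) (j i) / (j i).factorial) *
          (Y ^ n / risingFactorial c n) := by
        refine sum_le_sum fun j hj => ?_
        rw [← Nat.mem_antidiagonalTuple.mp hj]
        exact Phi2Term_le hb hc.le hy hyY j
    _ = oneF1Term (∑ i, b i) c Y n := by
        rw [← sum_mul, sum_antidiagonalTuple_prod_risingFactorial_div_factorial, oneF1Term]
        ring
end

/-- Inequality (3.3): the Lauricella function `Φ₂^{(k)}[1/(2k),…,1/(2k); α+1; x/2]` is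
bounded by `₁F₁[1/2; α+1; ‖x‖/2] ≤ exp(‖x‖/2)`. -/
theorem Phi2_le_oneF1_le_exp' (k : ℕ) (hk : 1 ≤ k) (α : ℝ) (hα : -(1 / 2) ≤ α)
    (x : Fin k → ℝ) (hx : ∀ i, 0 ≤ x i) :
    Phi2 k (fun _ => 1 / (2 * (k : ℝ))) (α + 1) (fun i => x i / 2) ≤
        oneF1 (1 / 2) (α + 1) ((⨆ i, |x i|) / 2) ∧
      oneF1 (1 / 2) (α + 1) ((⨆ i, |x i|) / 2) ≤ Real.exp ((⨆ i, |x i|) / 2) := by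
  set M := ⨆ i, |x i|
  have hxM (i : Fin k) : x i ≤ M :=
    (le_abs_self _).trans (le_ciSup (Finite.bddAbove_range fun i => |x i|) i)
  have hM : 0 ≤ M := (hx ⟨0, hk⟩).trans (hxM _)
  have hb : ∑ _i : Fin k, 1 / (2 * (k : ℝ)) = 1 / 2 := by
    have : (k : ℝ) ≠ 0 := by positivity
    simp only [sum_const, card_univ, Fintype.card_fin, nsmul_eq_mul]
    field_simp
  refine ⟨?_, oneF1_le_exp (by norm_num) (by linarith) (by positivity)⟩
  rw [← hb]
  exact Phi2_le_oneF1 (fun _ => by positivity) (by linarith) (fun i => by linarith [hx i])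
    (fun i => by linarith [hxM i]) (by positivity)
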